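/- For positive semidefinite symmetric matrices A and B of the same size, Tr((A^{1/2} B A^{1/2})^{1/2}) ≤ √(Tr(A) · Tr(B)). Consequently, the FPD covariance term satisfies Tr(A) + Tr(B) − 2 Tr((A^{1/2} B A^{1/2})^{1/2}) ≥ (√Tr(A) − √Tr(B))². -/

import Mathlib

open scoped ComplexOrder in
/-- The positive semidefinite square root of a positive semidefinite matrix
(as defined in Mathlib of December 2024, since removed). -/
noncomputable def Matrix.PosSemidef.sqrt {n 𝕜 : Type*} [Fintype n] [DecidableEq n] [RCLike 𝕜]
    {A : Matrix n n 𝕜} (hA : A.PosSemidef) : Matrix n n 𝕜 :=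
  hA.1.eigenvectorUnitary.1 * Matrix.diagonal ((↑) ∘ (√·) ∘ hA.1.eigenvalues) *
  (star hA.1.eigenvectorUnitary : Matrix n n 𝕜)

open scoped ComplexOrder in
theorem Matrix.PosSemidef.sqrt_mul_self {n 𝕜 : Type*} [Fintype n] [DecidableEq n] [RCLike 𝕜]
    {A : Matrix n n 𝕜} (hA : A.PosSemidef) : hA.sqrt * hA.sqrt = A := by
  set C : Matrix n n 𝕜 := hA.1.eigenvectorUnitary.1 with hCdef
  set D : Matrix n n 𝕜 := Matrix.diagonal ((↑) ∘ (√·) ∘ hA.1.eigenvalues) with hDdef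
  have hC : (star hA.1.eigenvectorUnitary : Matrix n n 𝕜) * C = 1 :=
    Unitary.coe_star_mul_self _
  have hE : D * D = Matrix.diagonal (RCLike.ofReal ∘ hA.1.eigenvalues) := by
    rw [hDdef, Matrix.diagonal_mul_diagonal]; congr 1; funext i
    simp only [Function.comp_apply, ← RCLike.ofReal_mul,
      Real.mul_self_sqrt (hA.eigenvalues_nonneg i)]
  conv_rhs => rw [hA.1.spectral_theorem, Unitary.conjStarAlgAut_apply]
  change C * D * (star hA.1.eigenvectorUnitary : Matrix n n 𝕜) *
    (C * D * (star hA.1.eigenvectorUnitary : Matrix n n 𝕜)) = _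
  rw [show C * D * (star hA.1.eigenvectorUnitary : Matrix n n 𝕜) *
    (C * D * (star hA.1.eigenvectorUnitary : Matrix n n 𝕜)) =
    C * (D * ((star hA.1.eigenvectorUnitary : Matrix n n 𝕜) * C) * D) *
      (star hA.1.eigenvectorUnitary : Matrix n n 𝕜) by simp only [Matrix.mul_assoc],
    hC, Matrix.mul_one, hE]

open scoped ComplexOrder in
theorem Matrix.PosSemidef.posSemidef_sqrt {n 𝕜 : Type*} [Fintype n] [DecidableEq n] [RCLike 𝕜]
    {A : Matrix n n 𝕜} (hA : A.PosSemidef) : hA.sqrt.PosSemidef := by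
  unfold Matrix.PosSemidef.sqrt
  simp only [Unitary.coe_star, Matrix.star_eq_conjTranspose]
  refine Matrix.PosSemidef.mul_mul_conjTranspose_same ?_ _
  refine Matrix.posSemidef_diagonal_iff.mpr fun i => ?_
  exact RCLike.ofReal_nonneg.mpr (Real.sqrt_nonneg _)



open Matrix in
private lemma psd_trace_nonneg' {d : ℕ} {M : Matrix (Fin d) (Fin d) ℝ}
    (h : M.PosSemidef) : 0 ≤ M.trace := by
  rw [Matrix.trace]
  refine Finset.sum_nonneg fun i _ => ?_
  simpa [dotProduct, Matrix.mulVec, Pi.single_apply] using h.dotProduct_mulVec_nonneg (Pi.single i 1)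

open Matrix in
private lemma psd_trace_mul_nonneg' {d : ℕ} {M N : Matrix (Fin d) (Fin d) ℝ}
    (hM : M.PosSemidef) (hN : N.PosSemidef) : 0 ≤ (M * N).trace := by
  have h1 : M * N = hM.sqrt * (hM.sqrt * N) := by
    rw [← mul_assoc, hM.sqrt_mul_self]
  rw [h1, Matrix.trace_mul_comm]
  have hpsd : ((hM.sqrt * N) * hM.sqrt).PosSemidef := by
    have := hN.mul_mul_conjTranspose_same hM.sqrt
    rwa [hM.posSemidef_sqrt.1.eq] at this
  exact psd_trace_nonneg' hpsd

open Matrix in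
private lemma contraction_flip' {d : ℕ} {V : Matrix (Fin d) (Fin d) ℝ}
    (h : ((1 : Matrix (Fin d) (Fin d) ℝ) - Vᴴ * V).PosSemidef) :
    ((1 : Matrix (Fin d) (Fin d) ℝ) - V * Vᴴ).PosSemidef := by
  have adj : ∀ (U : Matrix (Fin d) (Fin d) ℝ) (u w : Fin d → ℝ),
      u ⬝ᵥ (U *ᵥ w) = (Uᴴ *ᵥ u) ⬝ᵥ w := by
    intro U u w
    rw [Matrix.dotProduct_mulVec, conjTranspose_eq_transpose_of_trivial,
      Matrix.mulVec_transpose]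
  have hq : ∀ w : Fin d → ℝ, (V *ᵥ w) ⬝ᵥ (V *ᵥ w) ≤ w ⬝ᵥ w := by
    intro w
    have := h.dotProduct_mulVec_nonneg w
    simp only [star_trivial, Matrix.sub_mulVec, Matrix.one_mulVec,
      dotProduct_sub, sub_nonneg, ← Matrix.mulVec_mulVec] at this
    calc (V *ᵥ w) ⬝ᵥ (V *ᵥ w) = (Vᴴᴴ *ᵥ w) ⬝ᵥ (V *ᵥ w) := by
          rw [Matrix.conjTranspose_conjTranspose]
      _ = w ⬝ᵥ (Vᴴ *ᵥ (V *ᵥ w)) := (adj Vᴴ w _).symm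
      _ ≤ w ⬝ᵥ w := this
  refine Matrix.PosSemidef.of_dotProduct_mulVec_nonneg ?_ ?_
  · rw [Matrix.IsHermitian, Matrix.conjTranspose_sub, Matrix.conjTranspose_one,
      Matrix.conjTranspose_mul, Matrix.conjTranspose_conjTranspose]
  · intro x
    simp only [star_trivial, Matrix.sub_mulVec, Matrix.one_mulVec,
      dotProduct_sub, sub_nonneg, ← Matrix.mulVec_mulVec]
    set y := Vᴴ *ᵥ x with hy
    set z := V *ᵥ y with hz
    have h1 : x ⬝ᵥ (V *ᵥ y) = y ⬝ᵥ y := by rw [adj V x y]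
    have h2 : z ⬝ᵥ z ≤ y ⬝ᵥ y := hq y
    have h3 : 0 ≤ (x - z) ⬝ᵥ (x - z) := Finset.sum_nonneg fun i _ => mul_self_nonneg _
    have h4 : (x - z) ⬝ᵥ (x - z) = x ⬝ᵥ x - 2 * (y ⬝ᵥ y) + z ⬝ᵥ z := by
      rw [sub_dotProduct, dotProduct_sub, dotProduct_sub,
        dotProduct_comm z x, hz, h1]
      ring
    linarith

open Matrix in
/-- Trace inequality for the FPD covariance term: for positive semidefinite
`A`, `B`, `Tr((A^{1/2} B A^{1/2})^{1/2}) ≤ √(Tr A · Tr B)`, and consequently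
`Tr A + Tr B − 2 Tr((A^{1/2} B A^{1/2})^{1/2}) ≥ (√(Tr A) − √(Tr B))²`. -/
theorem fpd_cov_trace_ineq {d : ℕ}
    (A B : Matrix (Fin d) (Fin d) ℝ)
    (hA : A.PosSemidef) (hB : B.PosSemidef)
    (hmid : (hA.sqrt * B * hA.sqrt).PosSemidef) :
    hmid.sqrt.trace ≤ Real.sqrt (A.trace * B.trace) ∧
      (Real.sqrt A.trace - Real.sqrt B.trace) ^ 2 ≤
        A.trace + B.trace - 2 * hmid.sqrt.trace := by
  classical
  set μ : Fin d → ℝ := hmid.1.eigenvalues with hμdef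
  have hμnn : ∀ i, 0 ≤ μ i := fun i => hmid.eigenvalues_nonneg i
  set σ : Fin d → ℝ := fun i => Real.sqrt (μ i) with hσdef
  have hσnn : ∀ i, 0 ≤ σ i := fun i => Real.sqrt_nonneg _
  have hμσ : ∀ i, μ i = σ i ^ 2 := fun i => (Real.sq_sqrt (hμnn i)).symm
  set Q : Matrix (Fin d) (Fin d) ℝ := (hmid.1.eigenvectorUnitary : Matrix (Fin d) (Fin d) ℝ)
    with hQdef
  have hQsQ : star Q * Q = 1 := Unitary.coe_star_mul_self hmid.1.eigenvectorUnitary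
  have hQQs : Q * star Q = 1 := Unitary.coe_mul_star_self hmid.1.eigenvectorUnitary
  -- trace of the square root is the sum of √eigenvalues
  have htrS : hmid.sqrt.trace = ∑ i, σ i := by
    have h0 : hmid.sqrt = Q * Matrix.diagonal (RCLike.ofReal ∘ Real.sqrt ∘ μ) * star Q := rfl
    rw [h0, Matrix.trace_mul_cycle, hQsQ, Matrix.one_mul, Matrix.trace_diagonal]
    simp [RCLike.ofReal_real_eq_id, hσdef]
  -- spectral theorem
  have hQMQ : star Q * (hA.sqrt * B * hA.sqrt) * Q = Matrix.diagonal μ := by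
    have h := hmid.1.conjStarAlgAut_star_eigenvectorUnitary
    simpa [RCLike.ofReal_real_eq_id, Unitary.conjStarAlgAut_star_apply] using h
  set C : Matrix (Fin d) (Fin d) ℝ := hB.sqrt * hA.sqrt with hCdef
  have hCHC : Cᴴ * C = hA.sqrt * B * hA.sqrt := by
    rw [hCdef, Matrix.conjTranspose_mul, hA.posSemidef_sqrt.1.eq, hB.posSemidef_sqrt.1.eq,
      Matrix.mul_assoc, ← Matrix.mul_assoc hB.sqrt hB.sqrt hA.sqrt, hB.sqrt_mul_self,
      ← Matrix.mul_assoc]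
  set W : Matrix (Fin d) (Fin d) ℝ := C * Q with hWdef
  have hWW : Wᴴ * W = Matrix.diagonal μ := by
    rw [hWdef, Matrix.conjTranspose_mul, Matrix.mul_assoc, ← Matrix.mul_assoc Cᴴ C Q,
      hCHC, ← Matrix.mul_assoc, ← Matrix.star_eq_conjTranspose, hQMQ]
  set V : Matrix (Fin d) (Fin d) ℝ := W * Matrix.diagonal (fun i => (σ i)⁻¹) with hVdef
  have hdiagH : (Matrix.diagonal (fun i => (σ i)⁻¹))ᴴ = Matrix.diagonal (fun i => (σ i)⁻¹) := by
    rw [Matrix.diagonal_conjTranspose]; congr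
  have hVW : Vᴴ * W = Matrix.diagonal (fun i => (σ i)⁻¹ * μ i) := by
    rw [hVdef, Matrix.conjTranspose_mul, hdiagH, Matrix.mul_assoc, hWW,
      Matrix.diagonal_mul_diagonal]
  have hVV : Vᴴ * V = Matrix.diagonal (fun i => (σ i)⁻¹ * μ i * (σ i)⁻¹) := by
    rw [hVdef, Matrix.conjTranspose_mul, hdiagH, Matrix.mul_assoc, ← Matrix.mul_assoc Wᴴ W,
      hWW, Matrix.diagonal_mul_diagonal, Matrix.diagonal_mul_diagonal]
    refine congrArg Matrix.diagonal (funext fun i => ?_)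
    ring
  have hVWdiag : ∀ i, (Vᴴ * W) i i = σ i := by
    intro i
    rw [hVW, Matrix.diagonal_apply_eq]
    rcases eq_or_ne (σ i) 0 with h | h
    · have hμ0 : μ i = 0 := by
        have := hμσ i; rw [h] at this; simpa using this
      simp [h, hμ0]
    · rw [hμσ i]; field_simp
  have h1VV : ((1 : Matrix (Fin d) (Fin d) ℝ) - V * Vᴴ).PosSemidef := by
    apply contraction_flip'
    have h1 : (1 : Matrix (Fin d) (Fin d) ℝ) - Vᴴ * V
        = Matrix.diagonal (fun i => 1 - (σ i)⁻¹ * μ i * (σ i)⁻¹) := by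
      rw [hVV, ← Matrix.diagonal_one, Matrix.diagonal_sub]
    rw [h1]
    refine Matrix.posSemidef_diagonal_iff.mpr fun i => ?_
    rcases eq_or_ne (σ i) 0 with h | h
    · simp [h]
    · rw [hμσ i]
      have : (σ i)⁻¹ * σ i ^ 2 * (σ i)⁻¹ = 1 := by field_simp
      rw [this]; norm_num
  set X : Matrix (Fin d) (Fin d) ℝ := hB.sqrt * V with hXdef
  set Y : Matrix (Fin d) (Fin d) ℝ := hA.sqrt * Q with hYdef
  have hXY : Xᴴ * Y = Vᴴ * W := by
    rw [hXdef, hYdef, Matrix.conjTranspose_mul, hB.posSemidef_sqrt.1.eq, Matrix.mul_assoc,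
      ← Matrix.mul_assoc hB.sqrt hA.sqrt Q, hWdef, hCdef]
  have entry : ∀ (P R : Matrix (Fin d) (Fin d) ℝ) (i : Fin d),
      (Pᴴ * R) i i = ∑ k, P k i * R k i := by
    intro P R i
    simp [Matrix.mul_apply, Matrix.conjTranspose_apply]
  set a : Fin d → ℝ := fun i => (Xᴴ * X) i i with hadef
  set b : Fin d → ℝ := fun i => (Yᴴ * Y) i i with hbdef
  have hann : ∀ i, 0 ≤ a i := by
    intro i; rw [hadef]; simp only [entry]
    exact Finset.sum_nonneg fun k _ => mul_self_nonneg _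
  have hbnn : ∀ i, 0 ≤ b i := by
    intro i; rw [hbdef]; simp only [entry]
    exact Finset.sum_nonneg fun k _ => mul_self_nonneg _
  -- per-index Cauchy–Schwarz
  have hkey : ∀ i, σ i ≤ Real.sqrt (a i) * Real.sqrt (b i) := by
    intro i
    have h1 : σ i = ∑ k, X k i * Y k i := by rw [← hVWdiag i, ← hXY, entry]
    have cs := Finset.sum_mul_sq_le_sq_mul_sq Finset.univ (fun k => X k i) (fun k => Y k i)
    have ha : ∑ k, (X k i) ^ 2 = a i := by rw [hadef]; simp only [entry, sq]
    have hb : ∑ k, (Y k i) ^ 2 = b i := by rw [hbdef]; simp only [entry, sq]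
    calc σ i = ∑ k, X k i * Y k i := h1
      _ ≤ |∑ k, X k i * Y k i| := le_abs_self _
      _ = Real.sqrt ((∑ k, X k i * Y k i) ^ 2) := (Real.sqrt_sq_eq_abs _).symm
      _ ≤ Real.sqrt ((∑ k, (X k i) ^ 2) * ∑ k, (Y k i) ^ 2) := Real.sqrt_le_sqrt cs
      _ = Real.sqrt (a i) * Real.sqrt (b i) := by
          rw [ha, hb, Real.sqrt_mul (hann i)]
  -- sum-level Cauchy–Schwarz
  have hsum : ∑ i, σ i ≤ Real.sqrt (∑ i, a i) * Real.sqrt (∑ i, b i) := by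
    have cs := Finset.sum_mul_sq_le_sq_mul_sq Finset.univ
      (fun i => Real.sqrt (a i)) (fun i => Real.sqrt (b i))
    simp only [Real.sq_sqrt (hann _), Real.sq_sqrt (hbnn _)] at cs
    calc ∑ i, σ i ≤ ∑ i, Real.sqrt (a i) * Real.sqrt (b i) :=
          Finset.sum_le_sum fun i _ => hkey i
      _ ≤ |∑ i, Real.sqrt (a i) * Real.sqrt (b i)| := le_abs_self _
      _ = Real.sqrt ((∑ i, Real.sqrt (a i) * Real.sqrt (b i)) ^ 2) :=
          (Real.sqrt_sq_eq_abs _).symm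
      _ ≤ Real.sqrt ((∑ i, a i) * ∑ i, b i) := Real.sqrt_le_sqrt cs
      _ = Real.sqrt (∑ i, a i) * Real.sqrt (∑ i, b i) :=
          Real.sqrt_mul (Finset.sum_nonneg fun i _ => hann i) _
  -- identify the trace sums
  have htra : ∑ i, a i ≤ B.trace := by
    have h1 : Xᴴ * X = Vᴴ * (B * V) := by
      rw [hXdef, Matrix.conjTranspose_mul, hB.posSemidef_sqrt.1.eq, Matrix.mul_assoc,
        ← Matrix.mul_assoc hB.sqrt hB.sqrt V, hB.sqrt_mul_self]
    have h2 : ∑ i, a i = (B * (V * Vᴴ)).trace := by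
      rw [hadef]
      have : ∑ i, (Xᴴ * X) i i = (Xᴴ * X).trace := rfl
      rw [this, h1, Matrix.trace_mul_comm, Matrix.mul_assoc]
    have h3 := psd_trace_mul_nonneg' hB h1VV
    have h4 : B * ((1 : Matrix (Fin d) (Fin d) ℝ) - V * Vᴴ) = B - B * (V * Vᴴ) := by
      rw [Matrix.mul_sub, Matrix.mul_one]
    rw [h4, Matrix.trace_sub] at h3
    rw [h2]; linarith
  have htrb : ∑ i, b i = A.trace := by
    have h1 : Yᴴ * Y = star Q * A * Q := by
      rw [hYdef, Matrix.conjTranspose_mul, hA.posSemidef_sqrt.1.eq, Matrix.mul_assoc,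
        ← Matrix.mul_assoc hA.sqrt hA.sqrt Q, hA.sqrt_mul_self, ← Matrix.mul_assoc,
        ← Matrix.star_eq_conjTranspose]
    have : ∑ i, (Yᴴ * Y) i i = (Yᴴ * Y).trace := rfl
    rw [hbdef]
    rw [this, h1, Matrix.trace_mul_cycle, hQQs, Matrix.one_mul]
  have htrAnn : 0 ≤ A.trace := psd_trace_nonneg' hA
  have htrBnn : 0 ≤ B.trace := psd_trace_nonneg' hB
  have hmain : hmid.sqrt.trace ≤ Real.sqrt (A.trace * B.trace) := by
    calc hmid.sqrt.trace = ∑ i, σ i := htrS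
      _ ≤ Real.sqrt (∑ i, a i) * Real.sqrt (∑ i, b i) := hsum
      _ ≤ Real.sqrt B.trace * Real.sqrt A.trace := by
          apply mul_le_mul (Real.sqrt_le_sqrt htra) (le_of_eq (by rw [htrb]))
            (Real.sqrt_nonneg _) (Real.sqrt_nonneg _)
      _ = Real.sqrt (A.trace * B.trace) := by
          rw [← Real.sqrt_mul htrBnn, mul_comm]
  refine ⟨hmain, ?_⟩
  have hs : (Real.sqrt A.trace - Real.sqrt B.trace) ^ 2
      = A.trace + B.trace - 2 * Real.sqrt (A.trace * B.trace) := by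
    rw [sub_sq, Real.sq_sqrt htrAnn, Real.sq_sqrt htrBnn, Real.sqrt_mul htrAnn]
    ring
  rw [hs]; linarith
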